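/- Let X₁ ~ Poisson(n₁p₁) and X₂ ~ Poisson(n₂p₂) be independent. Then Var((X₁/n₁ - X₂/n₂)² - X₁/n₁² - X₂/n₂²) = 2(p₁/n₁ + p₂/n₂)² + 4(p₁ - p₂)²(p₁/n₁ + p₂/n₂). -/

import Mathlib

/-!
In falling factorial powers `x^{(k)} = x (x - 1) ⋯ (x - k + 1)` the statistic is
`Y = X₁^{(2)} / n₁² - 2 X₁ X₂ / (n₁ n₂) + X₂^{(2)} / n₂²`, and a Poisson variable of mean `λ` has
factorial moments `E X^{(k)} = λ^k`. Rewriting `Y²` in the basis `X₁^{(i)} X₂^{(j)}` (via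
`x^{(2)} x = x^{(3)} + 2 x^{(2)}` and `(x^{(2)})² = x^{(4)} + 4 x^{(3)} + 2 x^{(2)}`), independence
gives `E Y = (p₁ - p₂)²` and `E Y²` as a polynomial in `λᵢ = nᵢ pᵢ`; the variance formula is then
a rational identity.
-/

open MeasureTheory ProbabilityTheory

/-- `X` has the Poisson distribution with mean `l` under `μ`. -/
def IsPoisson {Ω : Type*} [MeasurableSpace Ω] (μ : Measure Ω) (X : Ω → ℕ) (l : ℝ) : Prop :=
  ∀ m : ℕ, (μ (X ⁻¹' {m})).toReal = Real.exp (-l) * l ^ m / m.factorial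

open scoped NNReal

theorem Nat.cast_descFactorial_succ {R : Type*} [Ring R] (n k : ℕ) :
    (n.descFactorial (k + 1) : R) = n.descFactorial k * (n - k) := by
  rw [← descPochhammer_eval_eq_descFactorial, ← descPochhammer_eval_eq_descFactorial,
    descPochhammer_succ_eval]

namespace ProbabilityTheory

section FactorialMoments

open Real
open scoped Nat

lemma hasSum_descFactorial_poissonMeasure (r : ℝ≥0) (k : ℕ) :
    HasSum (fun n ↦ exp (-r) * r ^ n / n ! * n.descFactorial k) ((r : ℝ) ^ k) := by
  have hshifted : (fun n ↦ exp (-r) * r ^ (n + k) / (n + k)! * (n + k).descFactorial k) =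
      fun n ↦ (r : ℝ) ^ k * (exp (-r) * r ^ n / n !) := by
    ext n
    have h := Nat.factorial_mul_descFactorial (Nat.le_add_left k n)
    rw [Nat.add_sub_cancel] at h
    rw [← h, Nat.cast_mul]
    field_simp
    ring
  have hlow : ∑ n ∈ Finset.range k, exp (-r) * r ^ n / n ! * (n.descFactorial k : ℝ) = 0 :=
    Finset.sum_eq_zero fun n hn ↦ by
      rw [Nat.descFactorial_eq_zero_iff_lt.2 (Finset.mem_range.1 hn), Nat.cast_zero, mul_zero]
  rw [← hasSum_nat_add_iff' k, hlow, sub_zero, hshifted]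
  simpa using (hasSum_one_poissonMeasure r).mul_left ((r : ℝ) ^ k)

lemma integrable_descFactorial_poissonMeasure (r : ℝ≥0) (k : ℕ) :
    Integrable (fun n : ℕ ↦ (n.descFactorial k : ℝ)) (poissonMeasure r) :=
  integrable_poissonMeasure_iff.2 <| by
    simpa only [Real.norm_natCast] using (hasSum_descFactorial_poissonMeasure r k).summable

lemma integral_descFactorial_poissonMeasure (r : ℝ≥0) (k : ℕ) :
    ∫ n, (n.descFactorial k : ℝ) ∂poissonMeasure r = (r : ℝ) ^ k :=
  (hasSum_integral_poissonMeasure (integrable_descFactorial_poissonMeasure r k)).unique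
    (hasSum_descFactorial_poissonMeasure r k)

end FactorialMoments

end ProbabilityTheory

section RandomVariables

variable {Ω : Type*} [MeasurableSpace Ω] {μ : Measure Ω}

lemma IsPoisson.hasLaw [IsFiniteMeasure μ] {X : Ω → ℕ} {l : ℝ≥0} (hX : Measurable X)
    (h : IsPoisson μ X l) : HasLaw X (poissonMeasure l) μ where
  aemeasurable := hX.aemeasurable
  map_eq := Measure.ext_of_singleton fun m ↦ by
    rw [Measure.map_apply hX (measurableSet_singleton m), poissonMeasure_singleton, ← h m,
      ENNReal.ofReal_toReal (measure_ne_top μ _)]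

namespace ProbabilityTheory

lemma HasLaw.integrable_descFactorial_poissonMeasure {X : Ω → ℕ} {r : ℝ≥0}
    (hX : HasLaw X (poissonMeasure r) μ) (k : ℕ) :
    Integrable (fun ω ↦ ((X ω).descFactorial k : ℝ)) μ := by
  have h := ProbabilityTheory.integrable_descFactorial_poissonMeasure r k
  rw [← hX.map_eq] at h
  exact h.comp_aemeasurable hX.aemeasurable

lemma HasLaw.integral_descFactorial_poissonMeasure {X : Ω → ℕ} {r : ℝ≥0}
    (hX : HasLaw X (poissonMeasure r) μ) (k : ℕ) :
    ∫ ω, ((X ω).descFactorial k : ℝ) ∂μ = (r : ℝ) ^ k := by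
  rw [← ProbabilityTheory.integral_descFactorial_poissonMeasure r k]
  exact hX.integral_comp (f := fun n : ℕ ↦ (n.descFactorial k : ℝ)) .of_discrete

def factorialMonomial (X₁ X₂ : Ω → ℕ) (i j : ℕ) (ω : Ω) : ℝ :=
  (X₁ ω).descFactorial i * (X₂ ω).descFactorial j

variable {X₁ X₂ : Ω → ℕ} {r₁ r₂ : ℝ≥0}

lemma IndepFun.comp_descFactorial (hind : IndepFun X₁ X₂ μ) (i j : ℕ) :
    IndepFun (fun ω ↦ ((X₁ ω).descFactorial i : ℝ)) (fun ω ↦ ((X₂ ω).descFactorial j : ℝ)) μ :=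
  hind.comp (measurable_of_countable fun n : ℕ ↦ (n.descFactorial i : ℝ))
    (measurable_of_countable fun n : ℕ ↦ (n.descFactorial j : ℝ))

lemma IndepFun.integrable_factorialMonomial (h₁ : HasLaw X₁ (poissonMeasure r₁) μ)
    (h₂ : HasLaw X₂ (poissonMeasure r₂) μ) (hind : IndepFun X₁ X₂ μ) (i j : ℕ) :
    Integrable (factorialMonomial X₁ X₂ i j) μ :=
  (hind.comp_descFactorial i j).integrable_mul
    (h₁.integrable_descFactorial_poissonMeasure i) (h₂.integrable_descFactorial_poissonMeasure j)

lemma IndepFun.integral_factorialMonomial (h₁ : HasLaw X₁ (poissonMeasure r₁) μ)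
    (h₂ : HasLaw X₂ (poissonMeasure r₂) μ) (hind : IndepFun X₁ X₂ μ) (i j : ℕ) :
    ∫ ω, factorialMonomial X₁ X₂ i j ω ∂μ = (r₁ : ℝ) ^ i * (r₂ : ℝ) ^ j := by
  rw [← h₁.integral_descFactorial_poissonMeasure i, ← h₂.integral_descFactorial_poissonMeasure j]
  exact (hind.comp_descFactorial i j).integral_fun_mul_eq_mul_integral
    (h₁.integrable_descFactorial_poissonMeasure i).aestronglyMeasurable
    (h₂.integrable_descFactorial_poissonMeasure j).aestronglyMeasurable

end ProbabilityTheory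

end RandomVariables

theorem stmt_11 {Ω : Type*} [MeasurableSpace Ω] (μ : Measure Ω) [IsProbabilityMeasure μ]
    (X₁ X₂ : Ω → ℕ) (hX₁m : Measurable X₁) (hX₂m : Measurable X₂)
    (n₁ n₂ p₁ p₂ : ℝ) (hn₁ : 0 < n₁) (hn₂ : 0 < n₂)
    (hp₁ : p₁ ∈ Set.Icc (0 : ℝ) 1) (hp₂ : p₂ ∈ Set.Icc (0 : ℝ) 1)
    (hX₁ : IsPoisson μ X₁ (n₁ * p₁)) (hX₂ : IsPoisson μ X₂ (n₂ * p₂))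
    (hind : IndepFun X₁ X₂ μ) :
    variance (fun ω => ((X₁ ω : ℝ) / n₁ - (X₂ ω : ℝ) / n₂) ^ 2
        - (X₁ ω : ℝ) / n₁ ^ 2 - (X₂ ω : ℝ) / n₂ ^ 2) μ
      = 2 * (p₁ / n₁ + p₂ / n₂) ^ 2 + 4 * (p₁ - p₂) ^ 2 * (p₁ / n₁ + p₂ / n₂) := by
  have h₁ := IsPoisson.hasLaw (l := ⟨n₁ * p₁, mul_nonneg hn₁.le hp₁.1⟩) hX₁m hX₁
  have h₂ := IsPoisson.hasLaw (l := ⟨n₂ * p₂, mul_nonneg hn₂.le hp₂.1⟩) hX₂m hX₂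
  have hF := hind.integrable_factorialMonomial h₁ h₂
  have hEF : ∀ i j, ∫ ω, factorialMonomial X₁ X₂ i j ω ∂μ = (n₁ * p₁) ^ i * (n₂ * p₂) ^ j :=
    hind.integral_factorialMonomial h₁ h₂
  set F := factorialMonomial X₁ X₂
  set Y := fun ω => ((X₁ ω : ℝ) / n₁ - (X₂ ω : ℝ) / n₂) ^ 2
    - (X₁ ω : ℝ) / n₁ ^ 2 - (X₂ ω : ℝ) / n₂ ^ 2
  have hY : Y = fun ω ↦ F 2 0 ω / n₁ ^ 2 - 2 * F 1 1 ω / (n₁ * n₂) + F 0 2 ω / n₂ ^ 2 := by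
    ext ω
    simp only [Y, F, factorialMonomial, Nat.cast_descFactorial_succ, Nat.descFactorial_zero]
    field_simp
    ring
  have hY2 : Y ^ 2 = fun ω ↦ (F 4 0 ω + 4 * F 3 0 ω + 2 * F 2 0 ω) / n₁ ^ 4
      + (F 0 4 ω + 4 * F 0 3 ω + 2 * F 0 2 ω) / n₂ ^ 4
      + (6 * F 2 2 ω + 4 * F 2 1 ω + 4 * F 1 2 ω + 4 * F 1 1 ω) / (n₁ ^ 2 * n₂ ^ 2)
      - 4 * (F 3 1 ω + 2 * F 2 1 ω) / (n₁ ^ 3 * n₂)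
      - 4 * (F 1 3 ω + 2 * F 1 2 ω) / (n₁ * n₂ ^ 3) := by
    ext ω
    simp only [Y, F, Pi.pow_apply, factorialMonomial, Nat.cast_descFactorial_succ,
      Nat.descFactorial_zero]
    field_simp
    ring
  have hY_memLp : MemLp Y 2 μ :=
    (memLp_two_iff_integrable_sq (by rw [hY]; fun_prop)).2
      (by change Integrable (Y ^ 2) μ; rw [hY2]; fun_prop)
  rw [variance_eq_sub hY_memLp, hY2, hY]
  simp (disch := fun_prop) only [integral_add, integral_sub, integral_div, integral_const_mul, hEF]
  field_simp
  ring
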